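/- arXiv:1910.06021 — 5 statements merged into one kernel-verified Lean document; each statement's English description precedes it below -/
import Mathlib

section
/- Let 0 < λ ≤ 1 and −1 ≤ B < A ≤ 0. For every n ∈ ℕ (n ≥ 0) one has Σ_{k=0}^{n} ([λ]_k / k!) · ((λ)_{n−k} / (n−k)!) · A^k · (−B)^{n−k} > 0. (In particular, all Taylor coefficients a_n(A,B,λ) of v_λ(A,B,z) = ((1+Az)/(1+Bz))^λ about z = 0 are strictly positive.) -/
/-!
With `a = -A`, `b = -B` (so `0 ≤ a < b`) one has `a_n = ∑ u_k a^k b^(n-k)`, where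
`u_k = (-1)^k ([λ]_k / k!) ((λ)_(n-k) / (n-k)!)` is the coefficient of `z^n` in
`(1 - z)^λ (1 - z)^(-λ) = 1`; by Chu–Vandermonde applied to `[λ + (-λ)]_n = 0`, the `u_k` sum to
`0` for `n ≥ 1`. For `0 < λ ≤ 1` every `u_k` with `k ≥ 1` is `≤ 0`, and `u_1 = -λ (λ)_(n-1)/(n-1)! < 0`.
Hence `a_n = ∑ u_k (a^k b^(n-k) - b^n)` is a sum of nonnegative terms whose `k = 1` term is positive.
-/

/-- The Taylor coefficient `a_n(A,B,λ)` of `v_λ(A,B,z) = ((1+Az)/(1+Bz))^λ` about `z = 0`: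
`a_n = ∑_{k=0}^{n} ([λ]_k / k!) ((λ)_{n−k} / (n−k)!) A^k (−B)^{n−k}`, where `[λ]_k` is the
falling factorial and `(λ)_k` the Pochhammer (rising factorial). -/
noncomputable def janowskiCoeff (l A B : ℝ) (n : ℕ) : ℝ :=
  ∑ k ∈ Finset.range (n + 1),
    ((descPochhammer ℝ k).eval l / (k.factorial : ℝ)) *
      ((ascPochhammer ℝ (n - k)).eval l / ((n - k).factorial : ℝ)) * A ^ k * (-B) ^ (n - k)

open Finset Polynomial

theorem descPochhammer_eval_add {R : Type*} [CommRing R] (x y : R) (n : ℕ) :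
    (descPochhammer R n).eval (x + y) = ∑ k ∈ range (n + 1),
      n.choose k * ((descPochhammer R k).eval x * (descPochhammer R (n - k)).eval y) := by
  have smeval_eq_eval (k : ℕ) (z : R) :
      (descPochhammer ℤ k).smeval z = (descPochhammer R k).eval z := by
    rw [← aeval_eq_smeval, aeval_def, eval₂_eq_eval_map, descPochhammer_map]
  simpa [smeval_eq_eval, Nat.sum_antidiagonal_eq_sum_range_succ
    (fun i j => (n.choose i : R) * ((descPochhammer R i).eval x * (descPochhammer R j).eval y))]
    using Ring.descPochhammer_smeval_add n (Commute.all x y)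

theorem sum_neg_one_pow_descPochhammer_mul_ascPochhammer {K : Type*} [Field K] [CharZero K]
    (x : K) {n : ℕ} (hn : n ≠ 0) :
    ∑ k ∈ range (n + 1), (-1) ^ k * ((descPochhammer K k).eval x / k.factorial) *
      ((ascPochhammer K (n - k)).eval x / (n - k).factorial) = 0 := by
  have hvanish : (descPochhammer K n).eval (x + -x) = 0 := by simp [hn]
  rw [descPochhammer_eval_add] at hvanish
  calc _ = (-1) ^ n / n.factorial * ∑ k ∈ range (n + 1),
        n.choose k * ((descPochhammer K k).eval x * (descPochhammer K (n - k)).eval (-x)) := by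
        rw [mul_sum]
        refine sum_congr rfl fun k hk => ?_
        have hkn : k ≤ n := Nat.lt_succ_iff.mp (mem_range.mp hk)
        have hsign : (-1 : K) ^ n = (-1) ^ k * (-1) ^ (n - k) := by
          rw [← pow_add, Nat.add_sub_cancel' hkn]
        rw [← neg_neg x, ascPochhammer_eval_neg_eq_descPochhammer, neg_neg, Nat.cast_choose K hkn,
          hsign]
        have hnf : (n.factorial : K) ≠ 0 := Nat.cast_ne_zero.mpr n.factorial_ne_zero
        field_simp
    _ = 0 := by rw [hvanish, mul_zero]

theorem neg_one_pow_mul_descPochhammer_eval_nonpos {R : Type*} [CommRing R] [LinearOrder R]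
    [IsStrictOrderedRing R] {x : R} (hx0 : 0 ≤ x) (hx1 : x ≤ 1) {k : ℕ} (hk : 1 ≤ k) :
    (-1) ^ k * (descPochhammer R k).eval x ≤ 0 := by
  induction k, hk using Nat.le_induction with
  | base => simpa using hx0
  | succ k hk ih =>
    have hfactor : x - k ≤ 0 := by
      have : (1 : R) ≤ k := by exact_mod_cast hk
      linarith
    calc (-1) ^ (k + 1) * (descPochhammer R (k + 1)).eval x
        = ((-1) ^ k * (descPochhammer R k).eval x) * -(x - k) := by
          rw [descPochhammer_succ_eval]; ring
      _ ≤ 0 := mul_nonpos_of_nonpos_of_nonneg ih (neg_nonneg.mpr hfactor)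

theorem sum_mul_pow_mul_pow_pos {R : Type*} [CommRing R] [LinearOrder R] [IsStrictOrderedRing R]
    {u : ℕ → R} {a b : R} {n : ℕ} (hn : 1 ≤ n) (hsum : ∑ k ∈ range (n + 1), u k = 0)
    (hu : ∀ k, 1 ≤ k → u k ≤ 0) (hu1 : u 1 < 0) (ha : 0 ≤ a) (hab : a < b) :
    0 < ∑ k ∈ range (n + 1), u k * (a ^ k * b ^ (n - k)) := by
  have hb : 0 < b := ha.trans_lt hab
  have hshift : ∑ k ∈ range (n + 1), u k * (a ^ k * b ^ (n - k))
      = ∑ k ∈ range (n + 1), u k * (a ^ k * b ^ (n - k) - b ^ n) := by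
    simp only [mul_sub, sum_sub_distrib, ← sum_mul, hsum, zero_mul, sub_zero]
  rw [hshift]
  refine sum_pos' (fun k hk => ?_) ⟨1, mem_range.mpr (by omega), ?_⟩
  · rcases Nat.eq_zero_or_pos k with rfl | hk1
    · simp
    have hkn : k ≤ n := Nat.lt_succ_iff.mp (mem_range.mp hk)
    have hle : a ^ k * b ^ (n - k) ≤ b ^ n := by
      calc a ^ k * b ^ (n - k) ≤ b ^ k * b ^ (n - k) := by gcongr
        _ = b ^ n := by rw [← pow_add, Nat.add_sub_cancel' hkn]
    exact mul_nonneg_of_nonpos_of_nonpos (hu k hk1) (sub_nonpos.mpr hle)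
  · have hlt : a * b ^ (n - 1) < b ^ n := by
      calc a * b ^ (n - 1) < b * b ^ (n - 1) := by gcongr
        _ = b ^ n := by rw [← pow_succ', Nat.sub_add_cancel hn]
    exact mul_pos_of_neg_of_neg hu1 (by simpa using hlt)

theorem coeff_pos_general (l A B : ℝ) (hl0 : 0 < l) (hl1 : l ≤ 1)
    (hBA : B < A) (hA : A ≤ 0) (n : ℕ) :
    0 < janowskiCoeff l A B n := by
  rcases Nat.eq_zero_or_pos n with rfl | hn
  · simp [janowskiCoeff]
  set u : ℕ → ℝ := fun k => (-1) ^ k * ((descPochhammer ℝ k).eval l / k.factorial) *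
    ((ascPochhammer ℝ (n - k)).eval l / (n - k).factorial) with hu
  have hcoeff :
      janowskiCoeff l A B n = ∑ k ∈ range (n + 1), u k * ((-A) ^ k * (-B) ^ (n - k)) := by
    refine sum_congr rfl fun k _ => ?_
    have hpow : A ^ k = (-1) ^ k * (-A) ^ k := by rw [← mul_pow, neg_one_mul, neg_neg]
    rw [hpow]
    ring
  have hasc (m : ℕ) : 0 < (ascPochhammer ℝ m).eval l / m.factorial :=
    div_pos (ascPochhammer_pos m l hl0) (by positivity)
  rw [hcoeff]
  refine sum_mul_pow_mul_pow_pos hn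
    (sum_neg_one_pow_descPochhammer_mul_ascPochhammer l hn.ne') (fun k hk => ?_) ?_
    (by linarith) (by linarith)
  · have hdesc := neg_one_pow_mul_descPochhammer_eval_nonpos hl0.le hl1 hk
    have hkf : (0 : ℝ) < k.factorial := by positivity
    calc u k = (-1) ^ k * (descPochhammer ℝ k).eval l / k.factorial *
          ((ascPochhammer ℝ (n - k)).eval l / (n - k).factorial) := by rw [hu, mul_div_assoc]
      _ ≤ 0 := mul_nonpos_of_nonpos_of_nonneg (div_nonpos_of_nonpos_of_nonneg hdesc hkf.le)
          (hasc _).le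
  · simpa [hu] using mul_pos hl0 (hasc (n - 1))

theorem coeff_pos (l A B : ℝ) (hl0 : 0 < l) (hl1 : l ≤ 1)
    (hB : -1 ≤ B) (hBA : B < A) (hA : A ≤ 0) (n : ℕ) :
    0 < janowskiCoeff l A B n :=
  coeff_pos_general l A B hl0 hl1 hBA hA n
end

section
/- Let 0 < λ ≤ 1 and −1 ≤ B < A ≤ 0, and let a_n = a_n(A,B,λ) denote the Taylor coefficients of v_λ(A,B,z). Then for all m, n ∈ ℕ (m, n ≥ 1), (m+1)(n+1) a_{n+1} + m n B a_n ≥ 0. -/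
/-!
Write `a_n = ∑_{i+j=n} p_i q_j` with `p_i = [λ]_i/i! · Aⁱ` and `q_j = (λ)_j/j! · (-B)ʲ`, the
coefficients of `(1+Az)^λ` and `(1+Bz)^{-λ}`. Their first-order recurrences turn the Leibniz rule
for the coefficients of a product into the coefficient form of
`(1+Bz) v' = (A-B) · λ(1+Az)^{λ-1} · (1+Bz)^{-λ}`:
`(n+1) a_{n+1} + n B a_n = (A - B) ∑_{i+j=n} (i+1) [λ]_{i+1}/(i+1)! · Aⁱ · q_j`.
For `0 < λ ≤ 1` and `B ≤ A ≤ 0` every summand on the right is nonnegative. By induction this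
gives `a_n ≥ 0`, and the claim is `m ((n+1) a_{n+1} + n B a_n) + (n+1) a_{n+1} ≥ 0`.
-/

open Finset Nat

section PochhammerCoeff

variable {K : Type*} [Field K]

noncomputable def fallingCoeff (l : K) (k : ℕ) : K := (descPochhammer K k).eval l / k !

noncomputable def risingCoeff (l : K) (k : ℕ) : K := (ascPochhammer K k).eval l / k !

variable [CharZero K]

theorem succ_mul_fallingCoeff_succ (l : K) (k : ℕ) :
    (k + 1) * fallingCoeff l (k + 1) = (l - k) * fallingCoeff l k := by
  have : (k ! : K) ≠ 0 := cast_ne_zero.mpr k.factorial_ne_zero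
  simp only [fallingCoeff, descPochhammer_succ_eval, factorial_succ, cast_mul, cast_succ]
  field_simp

theorem succ_mul_risingCoeff_succ (l : K) (k : ℕ) :
    (k + 1) * risingCoeff l (k + 1) = (l + k) * risingCoeff l k := by
  have : (k ! : K) ≠ 0 := cast_ne_zero.mpr k.factorial_ne_zero
  simp only [risingCoeff, ascPochhammer_succ_eval, factorial_succ, cast_mul, cast_succ]
  field_simp

end PochhammerCoeff

section Ordered

variable {K : Type*} [Field K] [LinearOrder K] [IsStrictOrderedRing K]

theorem risingCoeff_nonneg {l : K} (hl : 0 < l) (k : ℕ) : 0 ≤ risingCoeff l k :=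
  div_nonneg (ascPochhammer_pos k l hl).le (by positivity)

theorem fallingCoeff_succ_mul_pow_nonneg {l A : K} (hl0 : 0 < l) (hl1 : l ≤ 1) (hA : A ≤ 0)
    (k : ℕ) : 0 ≤ fallingCoeff l (k + 1) * A ^ k := by
  induction k with
  | zero => simpa [fallingCoeff] using hl0.le
  | succ k ih =>
    have hrec : fallingCoeff l (k + 2) * A ^ (k + 1) =
        (l - (k + 1)) * A / (k + 2) * (fallingCoeff l (k + 1) * A ^ k) := by
      have h := succ_mul_fallingCoeff_succ l (k + 1)
      push_cast at h
      field_simp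
      linear_combination A ^ (k + 1) * h
    have hfactor : 0 ≤ (l - (k + 1)) * A / (k + 2) :=
      div_nonneg (mul_nonneg_of_nonpos_of_nonpos (by linarith) hA) (by positivity)
    rw [hrec]
    exact mul_nonneg hfactor ih

end Ordered

theorem succ_mul_sum_antidiagonal_succ {R : Type*} [CommSemiring R] (p q : ℕ → R) (n : ℕ) :
    (n + 1 : R) * ∑ x ∈ antidiagonal (n + 1), p x.1 * q x.2 =
      ∑ x ∈ antidiagonal n,
        ((x.1 + 1 : R) * p (x.1 + 1) * q x.2 + p x.1 * ((x.2 + 1 : R) * q (x.2 + 1))) := by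
  have hsplit : (n + 1 : R) * ∑ x ∈ antidiagonal (n + 1), p x.1 * q x.2 =
      ∑ x ∈ antidiagonal (n + 1), (x.1 : R) * p x.1 * q x.2 +
        ∑ x ∈ antidiagonal (n + 1), p x.1 * ((x.2 : R) * q x.2) := by
    rw [mul_sum, ← sum_add_distrib]
    refine sum_congr rfl fun x hx => ?_
    have hx : (x.1 : R) + x.2 = n + 1 := by
      exact_mod_cast congrArg (Nat.cast : ℕ → R) (mem_antidiagonal.mp hx)
    rw [← hx]
    ring
  rw [hsplit, sum_antidiagonal_succ, sum_antidiagonal_succ', sum_add_distrib]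
  simp

theorem janowskiCoeff_eq_sum_antidiagonal (l A B : ℝ) (n : ℕ) :
    janowskiCoeff l A B n = ∑ x ∈ antidiagonal n,
      fallingCoeff l x.1 * A ^ x.1 * (risingCoeff l x.2 * (-B) ^ x.2) := by
  rw [Nat.sum_antidiagonal_eq_sum_range_succ_mk]
  refine sum_congr rfl fun k _ => ?_
  simp only [fallingCoeff, risingCoeff]
  ring

theorem succ_mul_janowskiCoeff_succ_add (l A B : ℝ) (n : ℕ) :
    (n + 1) * janowskiCoeff l A B (n + 1) + n * B * janowskiCoeff l A B n =
      (A - B) * ∑ x ∈ antidiagonal n,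
        (x.1 + 1) * fallingCoeff l (x.1 + 1) * A ^ x.1 * (risingCoeff l x.2 * (-B) ^ x.2) := by
  have hleibniz := succ_mul_sum_antidiagonal_succ (fun i => fallingCoeff l i * A ^ i)
    (fun j => risingCoeff l j * (-B) ^ j) n
  simp only [janowskiCoeff_eq_sum_antidiagonal]
  rw [hleibniz, mul_sum, mul_sum, ← sum_add_distrib]
  refine sum_congr rfl fun x hx => ?_
  have hn : (n : ℝ) = x.1 + x.2 := by exact_mod_cast (mem_antidiagonal.mp hx).symm
  rw [hn]
  linear_combination (A ^ x.1 * risingCoeff l x.2 * (-B) ^ x.2 * B) *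
      succ_mul_fallingCoeff_succ l x.1 +
    (fallingCoeff l x.1 * A ^ x.1 * (-B) ^ (x.2 + 1)) * succ_mul_risingCoeff_succ l x.2

theorem succ_mul_janowskiCoeff_succ_add_nonneg {l A B : ℝ} (hl0 : 0 < l) (hl1 : l ≤ 1)
    (hBA : B ≤ A) (hA : A ≤ 0) (n : ℕ) :
    0 ≤ (n + 1) * janowskiCoeff l A B (n + 1) + n * B * janowskiCoeff l A B n := by
  rw [succ_mul_janowskiCoeff_succ_add]
  refine mul_nonneg (sub_nonneg.mpr hBA) (sum_nonneg fun x _ => mul_nonneg ?_ ?_)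
  · rw [mul_assoc]
    exact mul_nonneg (by positivity) (fallingCoeff_succ_mul_pow_nonneg hl0 hl1 hA x.1)
  · exact mul_nonneg (risingCoeff_nonneg hl0 x.2) (pow_nonneg (by linarith) _)

theorem janowskiCoeff_nonneg {l A B : ℝ} (hl0 : 0 < l) (hl1 : l ≤ 1) (hBA : B ≤ A) (hA : A ≤ 0)
    (n : ℕ) : 0 ≤ janowskiCoeff l A B n := by
  induction n with
  | zero => simp [janowskiCoeff]
  | succ n ih =>
    have hcomb := succ_mul_janowskiCoeff_succ_add_nonneg hl0 hl1 hBA hA n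
    have hlast : n * B * janowskiCoeff l A B n ≤ 0 :=
      mul_nonpos_of_nonpos_of_nonneg (mul_nonpos_of_nonneg_of_nonpos n.cast_nonneg (by linarith)) ih
    exact nonneg_of_mul_nonneg_right (by linarith) (by positivity : (0 : ℝ) < n + 1)

theorem coeff_combination_nonneg_general (l A B : ℝ) (hl0 : 0 < l) (hl1 : l ≤ 1)
    (hBA : B < A) (hA : A ≤ 0) (m n : ℕ) :
    0 ≤ ((m : ℝ) + 1) * ((n : ℝ) + 1) * janowskiCoeff l A B (n + 1)
        + (m : ℝ) * (n : ℝ) * B * janowskiCoeff l A B n := by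
  have hcomb := succ_mul_janowskiCoeff_succ_add_nonneg hl0 hl1 hBA.le hA n
  have hcoeff := janowskiCoeff_nonneg hl0 hl1 hBA.le hA (n + 1)
  calc (0 : ℝ)
      ≤ m * ((n + 1) * janowskiCoeff l A B (n + 1) + n * B * janowskiCoeff l A B n)
          + (n + 1) * janowskiCoeff l A B (n + 1) :=
        add_nonneg (mul_nonneg m.cast_nonneg hcomb) (mul_nonneg (by positivity) hcoeff)
    _ = _ := by ring

theorem coeff_combination_nonneg (l A B : ℝ) (hl0 : 0 < l) (hl1 : l ≤ 1)
    (hB : -1 ≤ B) (hBA : B < A) (hA : A ≤ 0) (m n : ℕ) (hm : 1 ≤ m) (hn : 1 ≤ n) :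
    0 ≤ ((m : ℝ) + 1) * ((n : ℝ) + 1) * janowskiCoeff l A B (n + 1)
        + (m : ℝ) * (n : ℝ) * B * janowskiCoeff l A B n :=
  coeff_combination_nonneg_general l A B hl0 hl1 hBA hA m n
end

section
/- Let 0 < λ ≤ 1 and 0 ≤ α < β. Then for every n ∈ ℕ, β^n · Σ_{k=0}^{n} ([λ]_k / k!) · ((λ)_{n−k} / (n−k)!) · (−1)^k · (α/β)^k ≥ 0. -/
/-!
Write `c k = [l]_k / k! * (l)_{n-k} / (n-k)! * (-1)^k`, so the sum is `∑ c k * x ^ k` with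
`x = α / β ∈ [0, 1)`. Chu–Vandermonde for `[l + (-l)]_n = [0]_n`, together with
`[-l]_j = (-1)^j (l)_j`, gives `∑ c k = [0]_n / n! ≥ 0`. For `k ≥ 1` we have
`(-1)^k [l]_k = (-l)_k = -l (1-l)_{k-1} ≤ 0` when `0 ≤ l ≤ 1`, so `c k ≤ 0`, and hence
`∑ c k * x ^ k ≥ ∑ c k ≥ 0`.
-/

open Polynomial Finset

theorem sum_range_mul_pow_nonneg {R : Type*} [Ring R] [PartialOrder R] [IsOrderedRing R]
    {c : ℕ → R} {x : R} {n : ℕ} (hx0 : 0 ≤ x) (hx1 : x ≤ 1) (hsum : 0 ≤ ∑ k ∈ range n, c k)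
    (hc : ∀ k ∈ range n, k ≠ 0 → c k ≤ 0) : 0 ≤ ∑ k ∈ range n, c k * x ^ k :=
  hsum.trans <| sum_le_sum fun k hk => by
    rcases eq_or_ne k 0 with rfl | hk0
    · simp
    · exact le_mul_of_le_one_right (hc k hk hk0) (pow_le_one₀ hx0 hx1)

namespace Polynomial

theorem descPochhammer_eval_add {R : Type*} [CommRing R] (r s : R) (n : ℕ) :
    (descPochhammer R n).eval (r + s) = ∑ ij ∈ antidiagonal n,
      n.choose ij.1 * ((descPochhammer R ij.1).eval r * (descPochhammer R ij.2).eval s) := by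
  simpa only [← aeval_eq_smeval, aeval_def, algebraMap_int_eq, ← eval_map, descPochhammer_map]
    using Ring.descPochhammer_smeval_add n (Commute.all r s)

theorem descPochhammer_eval_neg {R : Type*} [CommRing R] (r : R) (k : ℕ) :
    (descPochhammer R k).eval (-r) = (-1) ^ k * (ascPochhammer R k).eval r := by
  rw [← neg_neg r, ascPochhammer_eval_neg_eq_descPochhammer, neg_neg, ← mul_assoc, ← mul_pow,
    neg_one_mul, neg_neg, one_pow, one_mul]

theorem ascPochhammer_eval_nonneg {S : Type*} [Semiring S] [PartialOrder S] [IsOrderedRing S]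
    {s : S} (hs : 0 ≤ s) (n : ℕ) :
    0 ≤ (ascPochhammer S n).eval s := by
  induction n with
  | zero => simp
  | succ n ih => rw [ascPochhammer_succ_eval]; exact mul_nonneg ih (by positivity)

theorem ascPochhammer_eval_neg_nonpos {S : Type*} [CommRing S] [LinearOrder S]
    [IsStrictOrderedRing S] {s : S} (hs0 : 0 ≤ s) (hs1 : s ≤ 1) {n : ℕ} (hn : n ≠ 0) :
    (ascPochhammer S n).eval (-s) ≤ 0 := by
  obtain ⟨m, rfl⟩ := Nat.exists_eq_succ_of_ne_zero hn
  rw [ascPochhammer_succ_left, eval_mul, eval_X, eval_comp, eval_add, eval_X, eval_one]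
  exact mul_nonpos_of_nonpos_of_nonneg (neg_nonpos.2 hs0)
    (ascPochhammer_eval_nonneg (by linarith) m)

theorem sum_range_descPochhammer_mul_ascPochhammer_mul_neg_one_pow {K : Type*} [Field K]
    [CharZero K] (x : K) (n : ℕ) :
    ∑ k ∈ range (n + 1), ((descPochhammer K k).eval x / (k.factorial : K)) *
        ((ascPochhammer K (n - k)).eval x / ((n - k).factorial : K)) * (-1) ^ k =
      if n = 0 then 1 else 0 := by
  have h := descPochhammer_eval_add x (-x) n
  rw [add_neg_cancel, descPochhammer_eval_zero, Nat.sum_antidiagonal_eq_sum_range_succ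
    (fun i j => (n.choose i : K) * ((descPochhammer K i).eval x * (descPochhammer K j).eval (-x)))]
    at h
  calc _ = (-1) ^ n / n.factorial * ∑ k ∈ range (n + 1), (n.choose k : K) *
        ((descPochhammer K k).eval x * (descPochhammer K (n - k)).eval (-x)) := by
        rw [mul_sum]
        refine sum_congr rfl fun k hk => ?_
        obtain ⟨m, rfl⟩ := Nat.exists_eq_add_of_le (Nat.lt_succ_iff.1 (mem_range.1 hk))
        rw [Nat.add_sub_cancel_left, descPochhammer_eval_neg,
          Nat.cast_choose K (Nat.le_add_right k m), Nat.add_sub_cancel_left]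
        have hsign : (-1 : K) ^ (k + m) * (-1) ^ m = (-1) ^ k := by
          rw [pow_add, mul_assoc, ← mul_pow, neg_one_mul, neg_neg, one_pow, mul_one]
        have hfac : ((k + m).factorial : K) ≠ 0 := Nat.cast_ne_zero.2 (Nat.factorial_ne_zero _)
        rw [← hsign]
        field_simp
    _ = if n = 0 then 1 else 0 := by rw [← h]; split_ifs <;> simp [*]

theorem descPochhammer_div_mul_ascPochhammer_div_mul_neg_one_pow_nonpos {K : Type*} [Field K]
    [LinearOrder K] [IsStrictOrderedRing K] {x : K} (hx0 : 0 ≤ x) (hx1 : x ≤ 1) {k : ℕ}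
    (hk : k ≠ 0) (m : ℕ) :
    (descPochhammer K k).eval x / (k.factorial : K) *
      ((ascPochhammer K m).eval x / (m.factorial : K)) * (-1) ^ k ≤ 0 := by
  have hdesc : (-1) ^ k * (descPochhammer K k).eval x ≤ 0 := by
    rw [← ascPochhammer_eval_neg_eq_descPochhammer]
    exact ascPochhammer_eval_neg_nonpos hx0 hx1 hk
  calc _ = (-1) ^ k * (descPochhammer K k).eval x * (ascPochhammer K m).eval x /
        (k.factorial * m.factorial) := by ring
    _ ≤ 0 := div_nonpos_of_nonpos_of_nonneg
        (mul_nonpos_of_nonpos_of_nonneg hdesc (ascPochhammer_eval_nonneg hx0 m)) (by positivity)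

end Polynomial

theorem scaled_alternating_pochhammer_sum_nonneg (l α β : ℝ) (hl0 : 0 < l) (hl1 : l ≤ 1)
    (hα : 0 ≤ α) (hαβ : α < β) (n : ℕ) :
    0 ≤ β ^ n * ∑ k ∈ Finset.range (n + 1),
      ((descPochhammer ℝ k).eval l / (k.factorial : ℝ)) *
        ((ascPochhammer ℝ (n - k)).eval l / ((n - k).factorial : ℝ)) *
        (-1 : ℝ) ^ k * (α / β) ^ k := by
  have hβ : 0 < β := hα.trans_lt hαβ
  refine mul_nonneg (pow_nonneg hβ.le n) (sum_range_mul_pow_nonneg (div_nonneg hα hβ.le)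
    ((div_le_one hβ).2 hαβ.le) ?_ fun k _ hk =>
      descPochhammer_div_mul_ascPochhammer_div_mul_neg_one_pow_nonpos hl0.le hl1 hk (n - k))
  rw [sum_range_descPochhammer_mul_ascPochhammer_mul_neg_one_pow]
  split_ifs <;> norm_num
end

section
/- For λ ∈ (0,1] and −1 ≤ B < 0, the function v_λ(0,B,z) = (1+Bz)^{−λ} is stable (i.e., stable with respect to itself): for every n ∈ ℕ, s_n((1+B·)^{−λ})(z) · (1+Bz)^{λ} ≺ (1+Bz)^{λ} on the open unit disk 𝔻. -/
/-- The `n`-th partial sum `s_n(f)(z) = ∑_{k=0}^n a_k z^k` of the Taylor expansion of `f`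
about `0`, where `a_k = f^{(k)}(0)/k!`. -/
noncomputable def partialSum (f : ℂ → ℂ) (n : ℕ) (z : ℂ) : ℂ :=
  ∑ k ∈ Finset.range (n + 1), (iteratedDeriv k f 0 / (k.factorial : ℂ)) * z ^ k

/-- `f` is subordinate to `g` on the open unit disk: there is an analytic
`ω : 𝔻 → 𝔻` with `ω 0 = 0` and `f = g ∘ ω` on `𝔻`. -/
def IsSubordinate (f g : ℂ → ℂ) : Prop :=
  ∃ ω : ℂ → ℂ, DifferentiableOn ℂ ω (Metric.ball 0 1) ∧ ω 0 = 0 ∧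
    (∀ z ∈ Metric.ball (0 : ℂ) 1, ω z ∈ Metric.ball (0 : ℂ) 1) ∧
    ∀ z ∈ Metric.ball (0 : ℂ) 1, f z = g (ω z)

open Finset Complex Metric Set Filter Topology Nat

/-!
Put `x = -B z` and let `P = s_n((1 - x)^{-λ})`; its coefficients `a_k = (λ)_k / k!` are positive
and, as `λ ≤ 1`, decreasing. The subordinating function is `ω(z) = (H(-B z) - 1) / B` with
`H = P^{1/λ} (1 - x)`, since then `(1 + B ω)^λ = H^λ = P (1 - x)^λ`, and `|ω(z)| < 1` follows
from `|H(x) - 1| ≤ |x|^{n+1}`. For that bound, `H' = -c x^n P^{1/λ - 1}` with `c > 0`; as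
`1/λ - 1 ≥ 0` and `|P(t x)| ≤ P(t)`, the derivative of `t ↦ H(t x)` is bounded by `|x|^{n+1}`
times `-ψ'(t)`, where the real function `ψ(t) = P(t)^{1/λ} (1 - t)` falls from `1` to `0`
on `[0, 1]`.
-/

/-- `(l)_k / k!`, the `k`-th Taylor coefficient of `(1 - x)⁻ˡ`. -/
noncomputable def negBinomCoeff (l : ℝ) (k : ℕ) : ℝ := ∏ j ∈ range k, (l + j) / (j + 1)

@[simp]
theorem negBinomCoeff_zero (l : ℝ) : negBinomCoeff l 0 = 1 := by simp [negBinomCoeff]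

theorem negBinomCoeff_succ (l : ℝ) (k : ℕ) :
    negBinomCoeff l (k + 1) = negBinomCoeff l k * ((l + k) / (k + 1)) :=
  prod_range_succ _ _

theorem succ_mul_negBinomCoeff_succ (l : ℝ) (k : ℕ) :
    (k + 1) * negBinomCoeff l (k + 1) = (l + k) * negBinomCoeff l k := by
  rw [negBinomCoeff_succ]
  field_simp

theorem negBinomCoeff_pos {l : ℝ} (hl : 0 < l) (k : ℕ) : 0 < negBinomCoeff l k :=
  prod_pos fun j _ => by positivity

theorem negBinomCoeff_succ_le {l : ℝ} (hl0 : 0 < l) (hl1 : l ≤ 1) (k : ℕ) :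
    negBinomCoeff l (k + 1) ≤ negBinomCoeff l k := by
  rw [negBinomCoeff_succ]
  refine mul_le_of_le_one_right (negBinomCoeff_pos hl0 k).le ?_
  rw [div_le_one (by positivity)]
  linarith

section RCLike

variable {𝕜 : Type*} [RCLike 𝕜]

noncomputable def negBinomPoly (l : ℝ) (n : ℕ) (x : 𝕜) : 𝕜 :=
  ∑ k ∈ range (n + 1), (negBinomCoeff l k : 𝕜) * x ^ k

theorem negBinomPoly_succ (l : ℝ) (n : ℕ) (x : 𝕜) :
    negBinomPoly l (n + 1) x
      = negBinomPoly l n x + (negBinomCoeff l (n + 1) : 𝕜) * x ^ (n + 1) :=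
  sum_range_succ _ _

@[simp]
theorem negBinomPoly_zero_left (l : ℝ) (x : 𝕜) : negBinomPoly l 0 x = 1 := by
  simp [negBinomPoly]

@[simp]
theorem negBinomPoly_zero_right (l : ℝ) (n : ℕ) : negBinomPoly l n (0 : 𝕜) = 1 := by
  induction n with
  | zero => simp
  | succ n ih => simp [negBinomPoly_succ, ih]

theorem continuous_negBinomPoly (l : ℝ) (n : ℕ) :
    Continuous (negBinomPoly (𝕜 := 𝕜) l n) := by
  unfold negBinomPoly; fun_prop

theorem hasDerivAt_negBinomPoly (l : ℝ) (n : ℕ) (x : 𝕜) :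
    HasDerivAt (negBinomPoly l n)
      (∑ k ∈ range n, ((l + k) * negBinomCoeff l k : ℝ) * x ^ k) x := by
  induction n with
  | zero =>
    rw [show negBinomPoly (𝕜 := 𝕜) l 0 = fun _ => 1 from funext (negBinomPoly_zero_left l)]
    simpa using hasDerivAt_const x (1 : 𝕜)
  | succ n ih =>
    rw [funext (negBinomPoly_succ l n)]
    have hpow := (hasDerivAt_pow (n + 1) x).const_mul (negBinomCoeff l (n + 1) : 𝕜)
    refine (ih.add hpow).congr_deriv ?_
    rw [sum_range_succ, ← succ_mul_negBinomCoeff_succ]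
    push_cast
    ring

/-- Truncation of the differential equation `(1 - x) f' = l f` satisfied by `f = (1 - x)⁻ˡ`. -/
theorem one_sub_mul_deriv_negBinomPoly (l : ℝ) (n : ℕ) (x : 𝕜) :
    (1 - x) * ∑ k ∈ range n, ((l + k) * negBinomCoeff l k : ℝ) * x ^ k
      = l * negBinomPoly l n x - ((l + n) * negBinomCoeff l n : ℝ) * x ^ n := by
  induction n with
  | zero => simp
  | succ n ih =>
    rw [sum_range_succ, mul_add, ih, negBinomPoly_succ, ← succ_mul_negBinomCoeff_succ]
    push_cast
    ring

theorem one_sub_mul_negBinomPoly_sub_one (l : ℝ) (n : ℕ) (x : 𝕜) :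
    (1 - x) * negBinomPoly l n x - 1
      = -(∑ k ∈ range (n + 1),
            ((negBinomCoeff l k - negBinomCoeff l (k + 1) : ℝ) : 𝕜) * x ^ (k + 1)
          + (negBinomCoeff l (n + 1) : 𝕜) * x ^ (n + 1)) := by
  induction n with
  | zero => simp; ring
  | succ n ih =>
    rw [negBinomPoly_succ, sum_range_succ]
    push_cast at ih ⊢
    linear_combination ih

theorem norm_one_sub_mul_negBinomPoly_sub_one_le {l : ℝ} (hl0 : 0 < l) (hl1 : l ≤ 1) (n : ℕ)
    {x : 𝕜} (hx : ‖x‖ ≤ 1) : ‖(1 - x) * negBinomPoly l n x - 1‖ ≤ ‖x‖ := by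
  have hpow (k : ℕ) : ‖x ^ (k + 1)‖ ≤ ‖x‖ := by
    rw [norm_pow]; exact pow_le_of_le_one (norm_nonneg x) hx k.succ_ne_zero
  rw [one_sub_mul_negBinomPoly_sub_one, norm_neg]
  calc _ ≤ ∑ k ∈ range (n + 1), (negBinomCoeff l k - negBinomCoeff l (k + 1)) * ‖x‖
          + negBinomCoeff l (n + 1) * ‖x‖ := by
        refine (norm_add_le _ _).trans (add_le_add ((norm_sum_le _ _).trans (sum_le_sum ?_)) ?_)
        · intro k _
          have hk := sub_nonneg.mpr (negBinomCoeff_succ_le hl0 hl1 k)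
          rw [norm_mul, RCLike.norm_ofReal, abs_of_nonneg hk]
          exact mul_le_mul_of_nonneg_left (hpow k) hk
        · have hn := (negBinomCoeff_pos hl0 (n + 1)).le
          rw [norm_mul, RCLike.norm_ofReal, abs_of_nonneg hn]
          exact mul_le_mul_of_nonneg_left (hpow n) hn
    _ = ‖x‖ := by
        rw [← sum_mul, sum_range_sub' (negBinomCoeff l), negBinomCoeff_zero]
        ring

theorem norm_negBinomPoly_le {l : ℝ} (hl : 0 < l) (n : ℕ) {x : 𝕜} {t : ℝ}
    (hxt : ‖x‖ ≤ t) : ‖negBinomPoly l n x‖ ≤ negBinomPoly l n t := by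
  refine (norm_sum_le _ _).trans (sum_le_sum fun k _ => ?_)
  have hk := (negBinomCoeff_pos hl k).le
  rw [norm_mul, norm_pow, RCLike.norm_ofReal, abs_of_nonneg hk, RCLike.ofReal_real_eq_id, id]
  exact mul_le_mul_of_nonneg_left (pow_le_pow_left₀ (norm_nonneg x) hxt k) hk

theorem one_le_negBinomPoly {l : ℝ} (hl : 0 < l) (n : ℕ) {t : ℝ} (ht : 0 ≤ t) :
    1 ≤ negBinomPoly l n t := by
  induction n with
  | zero => simp
  | succ n ih =>
    rw [negBinomPoly_succ, RCLike.ofReal_real_eq_id, id]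
    have := negBinomCoeff_pos hl (n + 1)
    have : 0 ≤ negBinomCoeff l (n + 1) * t ^ (n + 1) := by positivity
    linarith

end RCLike

theorem Complex.re_pos_of_norm_sub_one_lt {w : ℂ} (h : ‖w - 1‖ < 1) : 0 < w.re := by
  have := (abs_le.mp (abs_re_le_norm (w - 1))).1
  rw [sub_re, one_re] at this
  linarith

theorem Complex.div_mem_slitPlane_of_re_pos {u v : ℂ} (hu : 0 < u.re) (hv : 0 < v.re) :
    u / v ∈ slitPlane := by
  rw [mem_slitPlane_iff]
  by_contra! h
  have hv0 : v ≠ 0 := fun h => by simp [h] at hv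
  have hre : u.re = (u / v).re * v.re := by
    conv_lhs => rw [← div_mul_cancel₀ u hv0]
    simp [mul_re, h.2]
  nlinarith

theorem negBinomPoly_mem_slitPlane {l : ℝ} (hl0 : 0 < l) (hl1 : l ≤ 1) (n : ℕ) {z : ℂ}
    (hz : ‖z‖ < 1) : negBinomPoly l n z ∈ slitPlane := by
  have h1z : 0 < (1 - z).re := re_pos_of_norm_sub_one_lt (by simpa using hz)
  have hprod : 0 < ((1 - z) * negBinomPoly l n z).re :=
    re_pos_of_norm_sub_one_lt <|
      (norm_one_sub_mul_negBinomPoly_sub_one_le hl0 hl1 n hz.le).trans_lt hz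
  convert div_mem_slitPlane_of_re_pos hprod h1z using 1
  have : 1 - z ≠ 0 := fun h => by simp [h] at h1z
  field_simp

noncomputable def negBinomRoot (l : ℝ) (n : ℕ) (z : ℂ) : ℂ :=
  negBinomPoly l n z ^ ((l⁻¹ : ℝ) : ℂ) * (1 - z)

noncomputable def negBinomRootReal (l : ℝ) (n : ℕ) (t : ℝ) : ℝ :=
  negBinomPoly l n t ^ l⁻¹ * (1 - t)

@[simp]
theorem negBinomRoot_zero (l : ℝ) (n : ℕ) : negBinomRoot l n 0 = 1 := by
  simp [negBinomRoot]

theorem hasDerivAt_negBinomRoot {l : ℝ} (hl : 0 < l) (n : ℕ) {z : ℂ}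
    (hz : negBinomPoly l n z ∈ slitPlane) :
    HasDerivAt (negBinomRoot l n)
      (-(((l + n) * negBinomCoeff l n / l : ℝ) : ℂ) * z ^ n
        * negBinomPoly l n z ^ ((l⁻¹ - 1 : ℝ) : ℂ)) z := by
  have hP := (hasDerivAt_negBinomPoly l n z).cpow_const (c := ((l⁻¹ : ℝ) : ℂ)) hz
  refine (hP.mul ((hasDerivAt_id' z).const_sub 1)).congr_deriv ?_
  have hsplit : negBinomPoly l n z ^ ((l⁻¹ : ℝ) : ℂ)
      = negBinomPoly l n z ^ ((l⁻¹ - 1 : ℝ) : ℂ) * negBinomPoly l n z := by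
    rw [show ((l⁻¹ : ℝ) : ℂ) = ((l⁻¹ - 1 : ℝ) : ℂ) + 1 by push_cast; ring,
      cpow_add _ _ (slitPlane_ne_zero hz), cpow_one]
  have hinv : (l : ℂ)⁻¹ * l = 1 := inv_mul_cancel₀ (ofReal_ne_zero.mpr hl.ne')
  have hode := one_sub_mul_deriv_negBinomPoly l n z
  rw [hsplit]
  push_cast at hode ⊢
  linear_combination ((l : ℂ)⁻¹ * negBinomPoly l n z ^ ((l : ℂ)⁻¹ - 1)) * hode
    + (negBinomPoly l n z ^ ((l : ℂ)⁻¹ - 1) * negBinomPoly l n z) * hinv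

theorem hasDerivAt_negBinomRootReal {l : ℝ} (hl : 0 < l) (n : ℕ) {t : ℝ} (ht : 0 ≤ t) :
    HasDerivAt (negBinomRootReal l n)
      (-((l + n) * negBinomCoeff l n / l) * t ^ n * negBinomPoly l n t ^ (l⁻¹ - 1)) t := by
  have hpos : 0 < negBinomPoly l n t := one_pos.trans_le (one_le_negBinomPoly hl n ht)
  have hP := (hasDerivAt_negBinomPoly l n t).rpow_const (p := l⁻¹) (Or.inl hpos.ne')
  refine (hP.mul ((hasDerivAt_id' t).const_sub 1)).congr_deriv ?_
  have hsplit :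
      negBinomPoly l n t ^ l⁻¹ = negBinomPoly l n t ^ (l⁻¹ - 1) * negBinomPoly l n t := by
    rw [← Real.rpow_add_one hpos.ne']; ring_nf
  have hinv : l⁻¹ * l = 1 := inv_mul_cancel₀ hl.ne'
  have hode := one_sub_mul_deriv_negBinomPoly l n t
  simp only [RCLike.ofReal_real_eq_id, id] at hode ⊢
  rw [hsplit]
  linear_combination (l⁻¹ * negBinomPoly l n t ^ (l⁻¹ - 1)) * hode
    + (negBinomPoly l n t ^ (l⁻¹ - 1) * negBinomPoly l n t) * hinv

theorem norm_negBinomPoly_cpow_le {l : ℝ} (hl0 : 0 < l) (hl1 : l ≤ 1) (n : ℕ) {x : ℂ} {t : ℝ}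
    (hxt : ‖x‖ ≤ t) :
    ‖negBinomPoly l n x ^ ((l⁻¹ - 1 : ℝ) : ℂ)‖ ≤ negBinomPoly l n t ^ (l⁻¹ - 1) := by
  rw [norm_cpow_real]
  exact Real.rpow_le_rpow (norm_nonneg _) (norm_negBinomPoly_le hl0 n hxt)
    (sub_nonneg.mpr (one_le_inv₀ hl0 |>.mpr hl1))

theorem norm_negBinomRoot_sub_one_le {l : ℝ} (hl0 : 0 < l) (hl1 : l ≤ 1) (n : ℕ) {z : ℂ}
    (hz : ‖z‖ < 1) : ‖negBinomRoot l n z - 1‖ ≤ ‖z‖ ^ (n + 1) := by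
  set c := (l + n) * negBinomCoeff l n / l
  have hc : 0 ≤ c := by have := negBinomCoeff_pos hl0 n; positivity
  have hnorm {t : ℝ} (ht : t ∈ Icc (0 : ℝ) 1) : ‖(t : ℂ) * z‖ = t * ‖z‖ := by
    rw [norm_mul, norm_real, Real.norm_of_nonneg ht.1]
  set f' : ℝ → ℂ := fun t =>
    -(c : ℂ) * ((t : ℂ) * z) ^ n * negBinomPoly l n ((t : ℂ) * z) ^ ((l⁻¹ - 1 : ℝ) : ℂ) * z
  have hf {t : ℝ} (ht : t ∈ Icc (0 : ℝ) 1) :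
      HasDerivAt (fun t : ℝ => negBinomRoot l n (t * z) - 1) (f' t) t := by
    have hsmall : ‖(t : ℂ) * z‖ < 1 :=
      (hnorm ht).trans_lt ((mul_le_of_le_one_left (norm_nonneg z) ht.2).trans_lt hz)
    have hH := hasDerivAt_negBinomRoot hl0 n (negBinomPoly_mem_slitPlane hl0 hl1 n hsmall)
    have hlin : HasDerivAt (fun w : ℂ => w * z) z t := by
      simpa using (hasDerivAt_id' (t : ℂ)).mul_const z
    exact (hH.comp (t : ℂ) hlin).comp_ofReal.sub_const 1
  set B' : ℝ → ℝ := fun t => ‖z‖ ^ (n + 1) * (c * t ^ n * negBinomPoly l n t ^ (l⁻¹ - 1))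
  have hB {t : ℝ} (ht : t ∈ Icc (0 : ℝ) 1) :
      HasDerivAt (fun t => ‖z‖ ^ (n + 1) * (1 - negBinomRootReal l n t)) (B' t) t := by
    simpa [B'] using
      ((hasDerivAt_negBinomRootReal hl0 n ht.1).const_sub 1).const_mul (‖z‖ ^ (n + 1))
  have hbound {t : ℝ} (ht : t ∈ Icc (0 : ℝ) 1) : ‖f' t‖ ≤ B' t := by
    have hP := norm_negBinomPoly_cpow_le hl0 hl1 n
      ((hnorm ht).trans_le (mul_le_of_le_one_right ht.1 hz.le))
    have ht0 := ht.1
    simp only [f', B', norm_mul, norm_neg, norm_real, Real.norm_of_nonneg hc, norm_pow, hnorm ht]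
    calc c * (t * ‖z‖) ^ n * ‖negBinomPoly l n ((t : ℂ) * z) ^ ((l⁻¹ - 1 : ℝ) : ℂ)‖ * ‖z‖
        ≤ c * (t * ‖z‖) ^ n * negBinomPoly l n t ^ (l⁻¹ - 1) * ‖z‖ := by gcongr
      _ = _ := by ring
  have key := image_norm_le_of_norm_deriv_right_le_deriv_boundary' (a := 0) (b := 1)
    (fun t ht => (hf ht).continuousAt.continuousWithinAt)
    (fun t ht => (hf (Ico_subset_Icc_self ht)).hasDerivWithinAt)
    (by simp [negBinomRootReal])
    (fun t ht => (hB ht).continuousAt.continuousWithinAt)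
    (fun t ht => (hB (Ico_subset_Icc_self ht)).hasDerivWithinAt)
    (fun t ht => hbound (Ico_subset_Icc_self ht)) (right_mem_Icc.mpr zero_le_one)
  simpa [negBinomRootReal] using key

theorem re_negBinomRoot_pos {l : ℝ} (hl0 : 0 < l) (hl1 : l ≤ 1) (n : ℕ) {z : ℂ}
    (hz : ‖z‖ < 1) : 0 < (negBinomRoot l n z).re :=
  re_pos_of_norm_sub_one_lt <| (norm_negBinomRoot_sub_one_le hl0 hl1 n hz).trans_lt <|
    pow_lt_one₀ (norm_nonneg z) hz n.succ_ne_zero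

/-- Near `0` the imaginary part of `w = log P / l + log (1 - z)` is small, so `log` of
`negBinomRoot l n z = exp w` is `w` itself and both sides are `exp (log P + l log (1 - z))`. -/
theorem negBinomRoot_cpow_eventuallyEq {l : ℝ} (hl0 : 0 < l) (hl1 : l ≤ 1) (n : ℕ) :
    (fun z => negBinomRoot l n z ^ (l : ℂ)) =ᶠ[𝓝 0]
      fun z => negBinomPoly l n z * (1 - z) ^ (l : ℂ) := by
  set w : ℂ → ℂ := fun z => log (negBinomPoly l n z) * ((l⁻¹ : ℝ) : ℂ) + log (1 - z)
  have hw : ContinuousAt w 0 :=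
    (((continuous_negBinomPoly l n).continuousAt.clog (by simp)).mul continuousAt_const).add
      ((continuousAt_const.sub continuousAt_id).clog (by simp))
  have hsmall : ∀ᶠ z in 𝓝 0, ‖w z‖ < Real.pi :=
    hw.norm.eventually_lt continuousAt_const (by simp [w, Real.pi_pos])
  filter_upwards [hsmall, ball_mem_nhds (0 : ℂ) one_pos] with z hwz hz
  rw [mem_ball_zero_iff] at hz
  have hP : negBinomPoly l n z ≠ 0 :=
    slitPlane_ne_zero (negBinomPoly_mem_slitPlane hl0 hl1 n hz)
  have h1 : 1 - z ≠ 0 := sub_ne_zero.mpr fun h => by simp [← h] at hz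
  have him := abs_lt.mp ((abs_im_le_norm (w z)).trans_lt hwz)
  have hH : negBinomRoot l n z = exp (w z) := by
    rw [negBinomRoot, cpow_def_of_ne_zero hP, exp_add, exp_log h1]
  have hl : ((l⁻¹ : ℝ) : ℂ) * l = 1 := by
    push_cast; exact inv_mul_cancel₀ (ofReal_ne_zero.mpr hl0.ne')
  rw [hH, cpow_def_of_ne_zero (exp_ne_zero _), log_exp him.1 him.2.le, cpow_def_of_ne_zero h1,
    show w z * l = log (negBinomPoly l n z) + log (1 - z) * l by
      linear_combination log (negBinomPoly l n z) * hl,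
    exp_add, exp_log hP]

theorem negBinomRoot_cpow_eqOn {l : ℝ} (hl0 : 0 < l) (hl1 : l ≤ 1) (n : ℕ) :
    EqOn (fun z => negBinomRoot l n z ^ (l : ℂ))
      (fun z => negBinomPoly l n z * (1 - z) ^ (l : ℂ)) (ball (0 : ℂ) 1) := by
  have hH : DifferentiableOn ℂ (fun z => negBinomRoot l n z ^ (l : ℂ)) (ball 0 1) := by
    intro z hz
    rw [mem_ball_zero_iff] at hz
    have hH := hasDerivAt_negBinomRoot hl0 n (negBinomPoly_mem_slitPlane hl0 hl1 n hz)
    exact (hH.cpow_const (mem_slitPlane_iff.mpr (.inl (re_negBinomRoot_pos hl0 hl1 n hz))))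
      |>.differentiableAt.differentiableWithinAt
  have hP : DifferentiableOn ℂ (fun z : ℂ => negBinomPoly l n z * (1 - z) ^ (l : ℂ))
      (ball 0 1) := by
    intro z hz
    rw [mem_ball_zero_iff] at hz
    have h1 : 1 - z ∈ slitPlane :=
      mem_slitPlane_iff.mpr (.inl (re_pos_of_norm_sub_one_lt (by simpa using hz)))
    exact ((hasDerivAt_negBinomPoly l n z).differentiableAt.mul
      ((differentiableAt_const _).sub differentiableAt_id |>.cpow_const h1)).differentiableWithinAt
  exact (hH.analyticOnNhd isOpen_ball).eqOn_of_preconnected_of_eventuallyEq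
    (hP.analyticOnNhd isOpen_ball) (convex_ball 0 1).isPreconnected (mem_ball_self one_pos)
    (negBinomRoot_cpow_eventuallyEq hl0 hl1 n)

theorem iteratedDeriv_one_add_mul_cpow_neg (l : ℝ) (b : ℂ) (k : ℕ) :
    EqOn (iteratedDeriv k fun w => (1 + b * w) ^ (-(l : ℂ)))
      (fun w => ((k ! * negBinomCoeff l k : ℝ) : ℂ) * (-b) ^ k * (1 + b * w) ^ (-(l : ℂ) - k))
      {w | 1 + b * w ∈ slitPlane} := by
  have hU : IsOpen {w : ℂ | 1 + b * w ∈ slitPlane} :=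
    isOpen_slitPlane.preimage (by fun_prop)
  induction k with
  | zero => intro w _; simp
  | succ k ih =>
    intro w hw
    rw [iteratedDeriv_succ, (eventuallyEq_of_mem (hU.mem_nhds hw) ih).deriv_eq]
    have hlin : HasDerivAt (fun w : ℂ => 1 + b * w) b w := by
      simpa using ((hasDerivAt_id' w).const_mul b).const_add 1
    refine ((hlin.cpow_const hw).const_mul _).deriv.trans ?_
    have hrec : ((k : ℂ) + 1) * negBinomCoeff l (k + 1) = (l + k) * negBinomCoeff l k := by
      exact_mod_cast succ_mul_negBinomCoeff_succ l k
    rw [Nat.factorial_succ]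
    push_cast
    rw [show -(l : ℂ) - k - 1 = -l - (k + 1) by ring]
    linear_combination (-(k ! : ℂ) * (-b) ^ (k + 1) * (1 + b * w) ^ (-(l : ℂ) - (k + 1))) * hrec

theorem partialSum_one_add_mul_cpow_neg (l : ℝ) (b : ℂ) (n : ℕ) (z : ℂ) :
    partialSum (fun w => (1 + b * w) ^ (-(l : ℂ))) n z = negBinomPoly l n (-b * z) := by
  refine sum_congr rfl fun k _ => ?_
  have h0 : (0 : ℂ) ∈ {w | 1 + b * w ∈ slitPlane} := by simp
  rw [iteratedDeriv_one_add_mul_cpow_neg l b k h0]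
  have : (k ! : ℂ) ≠ 0 := by exact_mod_cast k.factorial_ne_zero
  simp only [mul_zero, add_zero, one_cpow, mul_one, mul_pow, RCLike.ofReal_eq_complex_ofReal]
  push_cast
  field_simp

theorem isSubordinate_partialSum_mul_cpow {l : ℝ} (hl0 : 0 < l) (hl1 : l ≤ 1) {b : ℂ}
    (hb0 : b ≠ 0) (hb : ‖b‖ ≤ 1) (n : ℕ) :
    IsSubordinate
      (fun z => partialSum (fun w => (1 + b * w) ^ (-(l : ℂ))) n z * (1 + b * z) ^ (l : ℂ))
      (fun z => (1 + b * z) ^ (l : ℂ)) := by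
  have hx {z : ℂ} (hz : z ∈ ball (0 : ℂ) 1) : ‖-b * z‖ < 1 := by
    rw [mem_ball_zero_iff] at hz
    rw [norm_mul, norm_neg]
    exact mul_lt_one_of_nonneg_of_lt_one_right hb (norm_nonneg z) hz
  refine ⟨fun z => (negBinomRoot l n (-b * z) - 1) / b, ?_, by simp,
    fun z hz => ?_, fun z hz => ?_⟩
  · intro z hz
    have hH := hasDerivAt_negBinomRoot hl0 n (negBinomPoly_mem_slitPlane hl0 hl1 n (hx hz))
    exact ((hH.differentiableAt.comp z (differentiableAt_id.const_mul (-b))).sub_const 1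
      |>.div_const b).differentiableWithinAt
  · rw [mem_ball_zero_iff] at hz ⊢
    calc ‖(negBinomRoot l n (-b * z) - 1) / b‖ ≤ ‖-b * z‖ ^ (n + 1) / ‖b‖ := by
          rw [norm_div]
          gcongr
          exact norm_negBinomRoot_sub_one_le hl0 hl1 n (hx (mem_ball_zero_iff.mpr hz))
      _ = ‖b‖ ^ n * ‖z‖ ^ (n + 1) := by
          rw [norm_mul, norm_neg]
          field_simp
          ring
      _ ≤ 1 * ‖z‖ ^ (n + 1) := by gcongr; exact pow_le_one₀ (norm_nonneg b) hb
      _ < 1 := by rw [one_mul]; exact pow_lt_one₀ (norm_nonneg z) hz n.succ_ne_zero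
  · have hroot := negBinomRoot_cpow_eqOn hl0 hl1 n (mem_ball_zero_iff.mpr (hx hz))
    simp only at hroot ⊢
    rw [mul_div_cancel₀ _ hb0, add_sub_cancel, hroot, partialSum_one_add_mul_cpow_neg, neg_mul,
      sub_neg_eq_add]

theorem v0_stable (l B : ℝ) (hl0 : 0 < l) (hl1 : l ≤ 1) (hB : -1 ≤ B) (hB0 : B < 0) (n : ℕ) :
    IsSubordinate
      (fun z => partialSum (fun w => (1 + (B : ℂ) * w) ^ (-(l : ℂ))) n z *
        (1 + (B : ℂ) * z) ^ (l : ℂ))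
      (fun z => (1 + (B : ℂ) * z) ^ (l : ℂ)) :=
  isSubordinate_partialSum_mul_cpow hl0 hl1 (ofReal_ne_zero.mpr hB0.ne)
    (by rw [norm_real, Real.norm_eq_abs, abs_le]; constructor <;> linarith) n
end

section
/- Let α, β > 0 and B ∈ [−1, 0). If F and G are analytic on the open unit disk 𝔻 with F ≺ (1+Bz)^{α} and G ≺ (1+Bz)^{β}, then the product satisfies F·G ≺ (1+Bz)^{α+β} on 𝔻. -/
/-!
Write `1 + B ω₁ = a` and `1 + B ω₂ = b`; both lie in the disk `‖· - 1‖ < r := |B| ≤ 1`. The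
principal logarithm maps this disk onto `{x + iy : |y| < π/2, eˣ + (1 - r²)e⁻ˣ - 2 cos y < 0}`,
a strict sublevel set of a function that is convex on the strip `|y| ≤ π/2`, hence a convex set.
So the weighted geometric mean `exp (α/(α+β) · log a + β/(α+β) · log b)` is again in the disk,
and `ω := (mean - 1) / B` is a Schwarz function with `(1 + B ω)^(α+β) = a^α b^β`.
-/

open Complex Metric Set
open scoped Real

lemma norm_exp_sub_one_lt_iff {w : ℂ} {r : ℝ} (hr : 0 ≤ r) :
    ‖exp w - 1‖ < r ↔
      Real.exp w.re + (1 - r ^ 2) * Real.exp (-w.re) - 2 * Real.cos w.im < 0 := by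
  have hnormSq : ‖exp w - 1‖ ^ 2 = Real.exp w.re * (Real.exp w.re - 2 * Real.cos w.im) + 1 := by
    rw [Complex.sq_norm, Complex.normSq_apply]
    simp only [sub_re, sub_im, exp_re, exp_im, one_re, one_im]
    linear_combination (Real.exp w.re) ^ 2 * Real.sin_sq_add_cos_sq w.im
  have hdiv : Real.exp w.re + (1 - r ^ 2) * Real.exp (-w.re) - 2 * Real.cos w.im
      = (‖exp w - 1‖ ^ 2 - r ^ 2) / Real.exp w.re := by
    rw [hnormSq, Real.exp_neg]
    field_simp
    ring
  rw [hdiv, div_lt_iff₀ (Real.exp_pos _), zero_mul, sub_neg, sq_lt_sq₀ (norm_nonneg _) hr]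

lemma convexOn_exp_re_add_exp_neg_re_sub_cos_im {s : ℝ} (hs : 0 ≤ s) :
    ConvexOn ℝ {w : ℂ | w.im ∈ Icc (-(π / 2)) (π / 2)}
      (fun w => Real.exp w.re + s * Real.exp (-w.re) - 2 * Real.cos w.im) := by
  have hstrip : Convex ℝ {w : ℂ | w.im ∈ Icc (-(π / 2)) (π / 2)} :=
    (convex_Icc _ _).linear_preimage imLm
  have hexp : ConvexOn ℝ univ (fun w : ℂ => Real.exp w.re) := convexOn_exp.comp_linearMap reLm
  have hexpneg : ConvexOn ℝ univ (fun w : ℂ => Real.exp (-w.re)) :=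
    convexOn_exp.comp_linearMap (-reLm)
  have hcos : ConcaveOn ℝ {w : ℂ | w.im ∈ Icc (-(π / 2)) (π / 2)} (fun w => Real.cos w.im) :=
    strictConcaveOn_cos_Icc.concaveOn.comp_linearMap imLm
  exact ((hexp.subset (subset_univ _) hstrip).add
    ((hexpneg.subset (subset_univ _) hstrip).smul hs)).sub (hcos.smul zero_le_two)

lemma convex_setOf_norm_exp_sub_one_lt {r : ℝ} (hr₀ : 0 ≤ r) (hr₁ : r ≤ 1) :
    Convex ℝ {w : ℂ | w.im ∈ Icc (-(π / 2)) (π / 2) ∧ ‖exp w - 1‖ < r} := by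
  have hset : {w : ℂ | w.im ∈ Icc (-(π / 2)) (π / 2) ∧ ‖exp w - 1‖ < r} =
      {w ∈ {w : ℂ | w.im ∈ Icc (-(π / 2)) (π / 2)} |
        Real.exp w.re + (1 - r ^ 2) * Real.exp (-w.re) - 2 * Real.cos w.im < 0} := by
    ext w
    simp only [mem_ofPred_eq, norm_exp_sub_one_lt_iff hr₀]
  rw [hset]
  exact (convexOn_exp_re_add_exp_neg_re_sub_cos_im (by nlinarith)).convex_lt 0

lemma re_pos_of_mem_ball_one {a : ℂ} {r : ℝ} (hr : r ≤ 1) (ha : a ∈ ball (1 : ℂ) r) : 0 < a.re := by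
  rw [mem_ball, dist_eq] at ha
  have := abs_re_le_norm (a - 1)
  rw [sub_re, one_re] at this
  linarith [neg_abs_le (a.re - 1)]

lemma exp_mul_log_add_mul_log_mem_ball {r μ ν : ℝ} (hr : r ≤ 1) {a b : ℂ}
    (ha : a ∈ ball (1 : ℂ) r) (hb : b ∈ ball (1 : ℂ) r) (hμ : 0 ≤ μ) (hν : 0 ≤ ν)
    (hμν : μ + ν = 1) :
    exp (μ * log a + ν * log b) ∈ ball (1 : ℂ) r := by
  have hlog : ∀ c ∈ ball (1 : ℂ) r,
      log c ∈ {w : ℂ | w.im ∈ Icc (-(π / 2)) (π / 2) ∧ ‖exp w - 1‖ < r} := by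
    intro c hc
    have hc₀ : 0 < c.re := re_pos_of_mem_ball_one hr hc
    refine ⟨?_, ?_⟩
    · rw [log_im, mem_Icc, ← abs_le]
      exact (abs_arg_lt_pi_div_two_iff.mpr (Or.inl hc₀)).le
    · rw [exp_log (by rintro rfl; simp at hc₀), ← dist_eq]
      exact hc
  have := (convex_setOf_norm_exp_sub_one_lt (dist_nonneg.trans_lt ha).le hr)
    (hlog a ha) (hlog b hb) hμ hν hμν
  simpa only [mem_ball, dist_eq, real_smul] using this.2

lemma log_exp_mul_log_add_mul_log {μ ν : ℝ} (hμ : 0 ≤ μ) (hν : 0 ≤ ν) (hμν : μ + ν = 1)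
    (a b : ℂ) : log (exp (μ * log a + ν * log b)) = μ * log a + ν * log b := by
  have him := convex_Ioc (-π) π ⟨neg_pi_lt_arg a, arg_le_pi a⟩ ⟨neg_pi_lt_arg b, arg_le_pi b⟩
    hμ hν hμν
  simp only [smul_eq_mul] at him
  apply log_exp <;> simp [log_im, him.1, him.2]

lemma exp_weighted_log_cpow_add {a b : ℂ} (ha : a ≠ 0) (hb : b ≠ 0) {α β : ℝ} (hα : 0 ≤ α)
    (hβ : 0 ≤ β) (hαβ : 0 < α + β) :
    exp (↑(α / (α + β)) * log a + ↑(β / (α + β)) * log b) ^ ((α : ℂ) + β) =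
      a ^ (α : ℂ) * b ^ (β : ℂ) := by
  rw [cpow_def_of_ne_zero (exp_ne_zero _), log_exp_mul_log_add_mul_log (by positivity)
    (by positivity) (by rw [← add_div, div_self hαβ.ne']), cpow_def_of_ne_zero ha,
    cpow_def_of_ne_zero hb, ← exp_add]
  have hαβ' : (α : ℂ) + β ≠ 0 := mod_cast hαβ.ne'
  congr 1
  push_cast
  field_simp

lemma one_add_mul_mem_ball {c w : ℂ} (hc : c ≠ 0) (hw : w ∈ ball (0 : ℂ) 1) :
    1 + c * w ∈ ball (1 : ℂ) ‖c‖ := by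
  rw [mem_ball_zero_iff] at hw
  rw [mem_ball, dist_eq, add_sub_cancel_left, norm_mul]
  exact mul_lt_of_lt_one_right (norm_pos_iff.mpr hc) hw

lemma sub_one_div_mem_ball {c v : ℂ} (hv : v ∈ ball (1 : ℂ) ‖c‖) :
    (v - 1) / c ∈ ball (0 : ℂ) 1 := by
  rw [mem_ball, dist_eq] at hv
  rw [mem_ball_zero_iff, norm_div, div_lt_one ((norm_nonneg _).trans_lt hv)]
  exact hv

lemma differentiableOn_log_one_add_mul {ω : ℂ → ℂ} {c : ℂ} (hc : ‖c‖ ≤ 1)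
    (hω : DifferentiableOn ℂ ω (ball 0 1)) (hωD : MapsTo ω (ball 0 1) (ball 0 1)) :
    DifferentiableOn ℂ (fun z => log (1 + c * ω z)) (ball 0 1) := by
  refine ((hω.const_mul c).const_add 1).clog fun z hz => mem_slitPlane_of_norm_lt_one ?_
  rw [norm_mul]
  exact mul_lt_one_of_nonneg_of_lt_one_right hc (norm_nonneg _) (mem_ball_zero_iff.mp (hωD hz))

theorem subordinate_mul_pow_general (α β B : ℝ) (hα : 0 < α) (hβ : 0 < β)
    (hB : -1 ≤ B) (hB0 : B < 0) (F G : ℂ → ℂ)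
    (hFs : IsSubordinate F (fun z => (1 + (B : ℂ) * z) ^ (α : ℂ)))
    (hGs : IsSubordinate G (fun z => (1 + (B : ℂ) * z) ^ (β : ℂ))) :
    IsSubordinate (fun z => F z * G z)
      (fun z => (1 + (B : ℂ) * z) ^ ((α : ℂ) + (β : ℂ))) := by
  obtain ⟨ω₁, hω₁, hω₁0, hω₁D, hFω₁⟩ := hFs
  obtain ⟨ω₂, hω₂, hω₂0, hω₂D, hGω₂⟩ := hGs
  have hB₀ : (B : ℂ) ≠ 0 := ofReal_ne_zero.mpr hB0.ne
  have hB₁ : ‖(B : ℂ)‖ ≤ 1 := by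
    rw [norm_real, Real.norm_eq_abs, abs_le]
    exact ⟨hB, by linarith⟩
  have hαβ : 0 < α + β := add_pos hα hβ
  set μ := α / (α + β)
  set ν := β / (α + β)
  have hμ : 0 ≤ μ := by positivity
  have hν : 0 ≤ ν := by positivity
  have hμν : μ + ν = 1 := by rw [← add_div, div_self hαβ.ne']
  set w : ℂ → ℂ := fun z => μ * log (1 + B * ω₁ z) + ν * log (1 + B * ω₂ z)
  refine ⟨fun z => (exp (w z) - 1) / B, ?_, ?_, fun z hz => ?_, fun z hz => ?_⟩
  · exact ((((differentiableOn_log_one_add_mul hB₁ hω₁ hω₁D).const_mul _).add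
      ((differentiableOn_log_one_add_mul hB₁ hω₂ hω₂D).const_mul _)).cexp.sub_const 1).div_const _
  · simp [w, hω₁0, hω₂0]
  · exact sub_one_div_mem_ball <| exp_mul_log_add_mul_log_mem_ball hB₁
      (one_add_mul_mem_ball hB₀ (hω₁D z hz)) (one_add_mul_mem_ball hB₀ (hω₂D z hz)) hμ hν hμν
  · have hne : ∀ ω : ℂ → ℂ, MapsTo ω (ball 0 1) (ball 0 1) → 1 + (B : ℂ) * ω z ≠ 0 :=
      fun ω hωD => ne_zero_of_re_pos <|
        re_pos_of_mem_ball_one hB₁ <| one_add_mul_mem_ball hB₀ (hωD hz)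
    simp only [hFω₁ z hz, hGω₂ z hz, mul_div_cancel₀ _ hB₀, add_sub_cancel]
    exact (exp_weighted_log_cpow_add (hne ω₁ hω₁D) (hne ω₂ hω₂D) hα.le hβ.le hαβ).symm

theorem subordinate_mul_pow (α β B : ℝ) (hα : 0 < α) (hβ : 0 < β)
    (hB : -1 ≤ B) (hB0 : B < 0) (F G : ℂ → ℂ)
    (hF : DifferentiableOn ℂ F (Metric.ball 0 1))
    (hG : DifferentiableOn ℂ G (Metric.ball 0 1))
    (hFs : IsSubordinate F (fun z => (1 + (B : ℂ) * z) ^ (α : ℂ)))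
    (hGs : IsSubordinate G (fun z => (1 + (B : ℂ) * z) ^ (β : ℂ))) :
    IsSubordinate (fun z => F z * G z)
      (fun z => (1 + (B : ℂ) * z) ^ ((α : ℂ) + (β : ℂ))) :=
  subordinate_mul_pow_general α β B hα hβ hB hB0 F G hFs hGs
end
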